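/- Let d ≥ 1, m ≥ 1 be natural numbers, and let q satisfy 1 ≤ q < 2 if d = 1, and 2d/(d+2m) < q < 2 if d ≥ 2. Set α = 1/q - 1/2. Then there exists a constant C > 0 such that for every measurable f : ℝ^d → ℂ with f ∈ L²(ℝ^d) and |x|^m f ∈ L²(ℝ^d), one has ‖f‖_{L^q} ≤ C ‖f‖_{L²}^{1 - dα/m} ‖|x|^m f‖_{L²}^{dα/m}. -/

import Mathlib

/-!
Write `f = g_R • h_R` with `g_R x = (1 + ‖x / R‖ ^ m)⁻¹` and `h_R x = (1 + ‖x / R‖ ^ m) • f x`.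
Hölder's inequality with `1 / q = 1 / r + 1 / 2`, i.e. `r = 1 / α`, gives
`‖f‖_q ≤ ‖g_R‖_r (‖f‖_2 + R⁻ᵐ ‖|x|ᵐ f‖_2)`. The weight `g_1` lies in `L^r` because `m r > d`
(this is exactly the lower bound on `q`), and `‖g_R‖_r = R^(d / r) ‖g_1‖_r` by scaling.
Choosing `Rᵐ = ‖|x|ᵐ f‖_2 / ‖f‖_2` balances the two terms and yields the inequality.
-/

open MeasureTheory Real ENNReal Module

lemma inv_one_add_pow_le {t : ℝ} (ht : 0 ≤ t) (m : ℕ) :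
    (1 + t ^ m)⁻¹ ≤ 2 ^ (m - 1) * ((1 + t) ^ m)⁻¹ := by
  rw [← div_eq_mul_inv, le_div_iff₀ (by positivity), inv_mul_le_iff₀ (by positivity)]
  simpa [mul_comm] using add_pow_le zero_le_one ht m

lemma rpow_mul_add_inv_pow_mul_eq {A B : ℝ} (hA : 0 < A) (hB : 0 < B) {m : ℕ} (hm : m ≠ 0)
    (s : ℝ) :
    ((B / A) ^ (m : ℝ)⁻¹) ^ s * (A + (((B / A) ^ (m : ℝ)⁻¹) ^ m)⁻¹ * B) =
      2 * A ^ (1 - s / m) * B ^ (s / m) := by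
  have hBA : 0 < B / A := div_pos hB hA
  have hpow : ((B / A) ^ (m : ℝ)⁻¹) ^ m = B / A := by
    rw [← Real.rpow_natCast, ← Real.rpow_mul hBA.le, inv_mul_cancel₀ (by exact_mod_cast hm),
      Real.rpow_one]
  rw [hpow, inv_div, div_mul_cancel₀ _ hB.ne', ← Real.rpow_mul hBA.le, inv_mul_eq_div,
    Real.div_rpow hB.le hA.le, Real.rpow_sub hA, Real.rpow_one]
  ring

lemma continuous_inv_one_add_norm_pow {E : Type*} [SeminormedAddCommGroup E] (m : ℕ) :
    Continuous fun x : E => (1 + ‖x‖ ^ m)⁻¹ :=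
  (by fun_prop : Continuous fun x : E => 1 + ‖x‖ ^ m).inv₀ fun x => by positivity

lemma eLpNorm_inv_one_add_norm_pow_ne_zero {E : Type*} [SeminormedAddCommGroup E]
    [MeasurableSpace E] [OpensMeasurableSpace E] (μ : Measure E) [NeZero μ] (m : ℕ)
    {r : ℝ≥0∞} (hr0 : r ≠ 0) :
    eLpNorm (fun x : E => (1 + ‖x‖ ^ m)⁻¹) r μ ≠ 0 := fun h => by
  obtain ⟨x, hx⟩ := ((eLpNorm_eq_zero_iff
    (continuous_inv_one_add_norm_pow m).aestronglyMeasurable hr0).mp h).exists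
  exact (inv_pos.2 (by positivity : (0 : ℝ) < 1 + ‖x‖ ^ m)).ne' hx

lemma ae_eq_zero_of_norm_pow_smul_ae_eq_zero {E F : Type*} [NormedAddCommGroup E]
    [MeasurableSpace E] [NormedAddCommGroup F] [NormedSpace ℝ F] {μ : Measure E}
    [NullSingletonClass μ] {m : ℕ} {f : E → F} (h : (fun x => (‖x‖ ^ m : ℝ) • f x) =ᵐ[μ] 0) :
    f =ᵐ[μ] 0 := by
  filter_upwards [h, μ.ae_ne 0] with x hx hx0
  exact (smul_eq_zero.mp hx).resolve_left (pow_ne_zero m (norm_ne_zero_iff.mpr hx0))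

section Normed

variable {E F : Type*} [NormedAddCommGroup E] [NormedSpace ℝ E] [MeasurableSpace E]
  [OpensMeasurableSpace E] [NormedAddCommGroup F] [NormedSpace ℝ F]

lemma eLpNorm_le_mul_eLpNorm_add (μ : Measure E) {p q r : ℝ≥0∞} [HolderTriple r p q]
    (hp : 1 ≤ p) (m : ℕ) {f : E → F} (hf : AEStronglyMeasurable f μ) {R : ℝ} (hR : 0 < R) :
    eLpNorm f q μ ≤ eLpNorm (fun x : E => (1 + ‖R⁻¹ • x‖ ^ m)⁻¹) r μ *
      (eLpNorm f p μ + ENNReal.ofReal (R ^ m)⁻¹ * eLpNorm (fun x => (‖x‖ ^ m : ℝ) • f x) p μ) := by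
  have hweight : Continuous fun x : E => (1 + ‖R⁻¹ • x‖ ^ m)⁻¹ :=
    (continuous_inv_one_add_norm_pow m).comp (continuous_const_smul _)
  set g : E → F := fun x => (‖x‖ ^ m : ℝ) • f x
  have hg : AEStronglyMeasurable g μ := (continuous_norm.pow m).aestronglyMeasurable.smul hf
  have hsplit : f = (fun x : E => (1 + ‖R⁻¹ • x‖ ^ m)⁻¹) • (f + (R ^ m)⁻¹ • g) := by
    ext x
    have : 1 + ‖R⁻¹ • x‖ ^ m ≠ 0 := by positivity
    simp only [g, Pi.smul_apply', Pi.add_apply, Pi.smul_apply, smul_smul]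
    rw [norm_smul, mul_pow, norm_inv, Real.norm_of_nonneg hR.le, inv_pow] at this ⊢
    rw [eq_inv_smul_iff₀ this, add_smul, one_smul]
  calc eLpNorm f q μ
      ≤ eLpNorm (fun x : E => (1 + ‖R⁻¹ • x‖ ^ m)⁻¹) r μ * eLpNorm (f + (R ^ m)⁻¹ • g) p μ := by
        conv_lhs => rw [hsplit]
        exact eLpNorm_smul_le_mul_eLpNorm (hf.add (hg.const_smul _)) hweight.aestronglyMeasurable
    _ ≤ _ := by
        gcongr
        refine (eLpNorm_add_le hf (hg.const_smul _) hp).trans_eq ?_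
        rw [eLpNorm_const_smul, ← ofReal_norm, Real.norm_of_nonneg (by positivity)]

end Normed

section Haar

variable {E F : Type*} [NormedAddCommGroup E] [NormedSpace ℝ E] [FiniteDimensional ℝ E]
  [MeasurableSpace E] [BorelSpace E] (μ : Measure E) [μ.IsAddHaarMeasure]
  [NormedAddCommGroup F]

lemma eLpNorm_comp_inv_smul {g : E → F} (hg : AEStronglyMeasurable g μ) (p : ℝ≥0∞) {R : ℝ}
    (hR : 0 < R) :
    eLpNorm (fun x => g (R⁻¹ • x)) p μ =
      ENNReal.ofReal (R ^ ((finrank ℝ E : ℝ) / p.toReal)) * eLpNorm g p μ := by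
  have hmap : μ.map (R⁻¹ • · : E → E) = ENNReal.ofReal (R ^ finrank ℝ E) • μ := by
    rw [Measure.map_addHaar_smul μ (inv_ne_zero hR.ne'), inv_pow, inv_inv,
      abs_of_pos (by positivity)]
  have hpos : ENNReal.ofReal (R ^ finrank ℝ E) ≠ 0 := by simp [hR]
  rw [← Function.comp_def, ← eLpNorm_map_measure _ (measurable_const_smul _).aemeasurable, hmap,
    eLpNorm_smul_measure_of_ne_zero hpos, smul_eq_mul, ENNReal.ofReal_rpow_of_nonneg
    (by positivity) (by positivity), ← Real.rpow_natCast, ← Real.rpow_mul hR.le, one_div,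
    ENNReal.toReal_inv, div_eq_mul_inv]
  rw [hmap]
  exact hg.smul_measure _

lemma memLp_inv_one_add_norm_pow (m : ℕ) {r : ℝ≥0∞} (hr0 : r ≠ 0) (hrt : r ≠ ∞)
    (hmr : (finrank ℝ E : ℝ) < m * r.toReal) :
    MemLp (fun x : E => (1 + ‖x‖ ^ m)⁻¹) r μ := by
  rw [← integrable_norm_rpow_iff (continuous_inv_one_add_norm_pow m).aestronglyMeasurable hr0 hrt]
  refine ((integrable_one_add_norm hmr).const_mul (((2 : ℝ) ^ (m - 1)) ^ r.toReal)).mono'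
    (by fun_prop (disch := positivity)) (Filter.Eventually.of_forall fun x => ?_)
  have hx : 0 < 1 + ‖x‖ := by positivity
  rw [Real.norm_of_nonneg (by positivity), Real.norm_of_nonneg (by positivity)]
  calc (1 + ‖x‖ ^ m)⁻¹ ^ r.toReal ≤ (2 ^ (m - 1) * ((1 + ‖x‖) ^ m)⁻¹) ^ r.toReal := by
        gcongr
        exact inv_one_add_pow_le (norm_nonneg x) m
    _ = _ := by
        rw [Real.mul_rpow (by positivity) (by positivity), Real.inv_rpow (by positivity),
          ← Real.rpow_natCast (1 + ‖x‖), ← Real.rpow_mul hx.le, Real.rpow_neg hx.le]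

lemma eLpNorm_le_interpolation [Nontrivial E] [NormedSpace ℝ F] {p q r : ℝ≥0∞}
    [HolderTriple r p q] (hp : 1 ≤ p) {m : ℕ} (hm : m ≠ 0) {f : E → F} (hf : MemLp f p μ)
    (hfm : MemLp (fun x => (‖x‖ ^ m : ℝ) • f x) p μ) :
    eLpNorm f q μ ≤ eLpNorm (fun x : E => (1 + ‖x‖ ^ m)⁻¹) r μ *
      ENNReal.ofReal (2 * (eLpNorm f p μ).toReal ^ (1 - finrank ℝ E / r.toReal / m) *
        (eLpNorm (fun x => (‖x‖ ^ m : ℝ) • f x) p μ).toReal ^ (finrank ℝ E / r.toReal / m)) := by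
  by_cases hf0 : f =ᵐ[μ] 0
  · simp [eLpNorm_congr_ae hf0]
  have hp0 : p ≠ 0 := (zero_lt_one.trans_le hp).ne'
  have hA : 0 < (eLpNorm f p μ).toReal :=
    ENNReal.toReal_pos (mt (eLpNorm_eq_zero_iff hf.1 hp0).mp hf0) hf.eLpNorm_ne_top
  have hB : 0 < (eLpNorm (fun x => (‖x‖ ^ m : ℝ) • f x) p μ).toReal :=
    ENNReal.toReal_pos (mt (fun h => ae_eq_zero_of_norm_pow_smul_ae_eq_zero
      ((eLpNorm_eq_zero_iff hfm.1 hp0).mp h)) hf0) hfm.eLpNorm_ne_top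
  set A := (eLpNorm f p μ).toReal
  set B := (eLpNorm (fun x => (‖x‖ ^ m : ℝ) • f x) p μ).toReal
  set R := (B / A) ^ (m : ℝ)⁻¹
  have hR : 0 < R := by positivity
  calc eLpNorm f q μ
      ≤ eLpNorm (fun x : E => (1 + ‖R⁻¹ • x‖ ^ m)⁻¹) r μ * (eLpNorm f p μ +
          ENNReal.ofReal (R ^ m)⁻¹ * eLpNorm (fun x => (‖x‖ ^ m : ℝ) • f x) p μ) :=
        eLpNorm_le_mul_eLpNorm_add μ hp m hf.1 hR
    _ = eLpNorm (fun x : E => (1 + ‖x‖ ^ m)⁻¹) r μ *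
          ENNReal.ofReal (R ^ ((finrank ℝ E : ℝ) / r.toReal) * (A + (R ^ m)⁻¹ * B)) := by
        rw [eLpNorm_comp_inv_smul μ (continuous_inv_one_add_norm_pow m).aestronglyMeasurable r hR,
          ← ofReal_toReal hf.eLpNorm_ne_top, ← ofReal_toReal hfm.eLpNorm_ne_top,
          ← ofReal_mul (by positivity), ← ofReal_add hA.le (by positivity),
          ofReal_mul (by positivity)]
        ring
    _ = _ := by rw [rpow_mul_add_inv_pow_mul_eq hA hB hm]

end Haar

lemma holderTriple_inv_ofReal {q α : ℝ} (hq : 0 < q) (hα0 : 0 ≤ α) (hα : α = 1 / q - 1 / 2) :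
    HolderTriple (ENNReal.ofReal α)⁻¹ 2 (ENNReal.ofReal q) := by
  constructor
  rw [inv_inv, ← ofReal_inv_of_pos hq, ← ofReal_ofNat 2, ← ofReal_inv_of_pos two_pos,
    ← ofReal_add hα0 (by norm_num), hα]
  congr 1
  ring

lemma interpolation_exponent_bounds {d m : ℕ} (hm : 1 ≤ m) {q α : ℝ}
    (hq : (d = 1 ∧ 1 ≤ q ∧ q < 2) ∨
      (2 ≤ d ∧ 2 * (d : ℝ) / ((d : ℝ) + 2 * m) < q ∧ q < 2))
    (hα : α = 1 / q - 1 / 2) :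
    0 < q ∧ 0 < α ∧ d * α < m := by
  have hm' : (1 : ℝ) ≤ m := by exact_mod_cast hm
  have hq0 : 0 < q := by
    rcases hq with ⟨-, h1, -⟩ | ⟨-, h1, -⟩
    · linarith
    · exact lt_of_le_of_lt (by positivity) h1
  have hq2 : q < 2 := by rcases hq with ⟨-, -, h2⟩ | ⟨-, -, h2⟩ <;> exact h2
  refine ⟨hq0, ?_, ?_⟩
  · rw [hα, sub_pos]; exact one_div_lt_one_div_of_lt hq0 hq2
  rcases hq with ⟨rfl, h1, -⟩ | ⟨-, h1, -⟩
  · have : 1 / q ≤ 1 := by rw [div_le_one hq0]; exact h1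
    push_cast
    linarith
  · have hsplit : (d : ℝ) * α = (2 * d - q * d) / (2 * q) := by
      rw [hα]; field_simp
    rw [div_lt_iff₀ (by positivity)] at h1
    rw [hsplit, div_lt_iff₀ (by positivity)]
    linarith

/-- Weighted interpolation inequality (dual Gagliardo–Nirenberg). -/
theorem stmt0 (d m : ℕ) (hd : 1 ≤ d) (hm : 1 ≤ m) (q α : ℝ)
    (hq : (d = 1 ∧ 1 ≤ q ∧ q < 2) ∨
      (2 ≤ d ∧ 2 * (d : ℝ) / ((d : ℝ) + 2 * m) < q ∧ q < 2))
    (hα : α = 1 / q - 1 / 2) :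
    ∃ C > 0, ∀ f : EuclideanSpace ℝ (Fin d) → ℂ,
      MemLp f 2 volume →
      MemLp (fun x => (‖x‖ ^ m : ℝ) • f x) 2 volume →
      MemLp f (ENNReal.ofReal q) volume ∧
      (eLpNorm f (ENNReal.ofReal q) volume).toReal ≤
        C * (eLpNorm f 2 volume).toReal ^ (1 - (d : ℝ) * α / m) *
          (eLpNorm (fun x => (‖x‖ ^ m : ℝ) • f x) 2 volume).toReal ^ ((d : ℝ) * α / m) := by
  obtain ⟨hq0, hα0, hdα⟩ := interpolation_exponent_bounds hm hq hα
  have : HolderTriple (ENNReal.ofReal α)⁻¹ 2 (ENNReal.ofReal q) :=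
    holderTriple_inv_ofReal hq0 hα0.le hα
  have : Nonempty (Fin d) := ⟨⟨0, hd⟩⟩
  set r := (ENNReal.ofReal α)⁻¹
  have hr : r.toReal = α⁻¹ := by rw [toReal_inv, toReal_ofReal hα0.le]
  have hexp : (finrank ℝ (EuclideanSpace ℝ (Fin d)) : ℝ) / r.toReal / m = d * α / m := by
    rw [finrank_euclideanSpace_fin, hr, div_inv_eq_mul]
  have hr0 : r ≠ 0 := ENNReal.inv_ne_zero.2 ofReal_ne_top
  have hw := memLp_inv_one_add_norm_pow volume m hr0
    (ENNReal.inv_ne_top.2 (ofReal_pos.2 hα0).ne') (by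
      rw [finrank_euclideanSpace_fin, hr, ← div_eq_mul_inv, lt_div_iff₀ hα0]; exact hdα)
  set w := eLpNorm (fun x : EuclideanSpace ℝ (Fin d) => (1 + ‖x‖ ^ m)⁻¹) r volume
  refine ⟨2 * w.toReal, mul_pos two_pos (toReal_pos
    (eLpNorm_inv_one_add_norm_pow_ne_zero volume m hr0) hw.eLpNorm_ne_top), fun f hf hfm => ?_⟩
  have hbound := eLpNorm_le_interpolation volume one_le_two (by omega : m ≠ 0) hf hfm (r := r)
    (q := ENNReal.ofReal q)
  rw [hexp] at hbound
  refine ⟨⟨hf.1, hbound.trans_lt (mul_lt_top hw.2 ofReal_lt_top)⟩, ?_⟩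
  refine (toReal_mono (mul_ne_top hw.eLpNorm_ne_top ofReal_ne_top) hbound).trans_eq ?_
  rw [toReal_mul, toReal_ofReal (by positivity)]
  ring
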